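/- arXiv:1804.02511 — 2 statements merged into one kernel-verified Lean document; each statement's English description precedes it below -/
import Mathlib

section
/- A multi-component virtual link diagram D admits an affine labeling if and only if D is compatible, i.e., every component of D has algebraic intersection number zero with the union of the other components: in a traverse of a given component, each self-crossing is met twice with canceling increments +1 and -1, while each crossing with another component is met once with increment equal to its sign relative to that component, so the labeling closes up on every component exactly when each such signed sum vanishes. -/
/-!
# Virtual knots and links via signed Gauss codes

A virtual knot or link diagram, up to the virtual Reidemeister moves and the
detour move, is faithfully encoded by its signed oriented Gauss code: the
cyclic sequence, along each component, of passages through the classical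
crossings, each passage recording the crossing's name, whether the strand
passes over or under, and the crossing sign.  Virtual crossings and the
detour move are invisible in this encoding, so oriented virtual isotopy is
generated by the oriented classical Reidemeister moves together with
re-encoding moves (rotation of the base point, permutation of the components,
renaming of the crossings).
-/

open LaurentPolynomial

/-- A passage of a strand through a classical crossing of a virtual diagram. -/
structure Passage where
  id : ℕ
  isOver : Bool
  sign : ℤ
  deriving DecidableEq, Repr

instance : Inhabited Passage := ⟨⟨0, false, 0⟩⟩

/-- The affine-label increment when the strand passes through a crossing:
crossing to the left increases the label by one, crossing to the right
decreases it by one.  For a positive crossing the over-strand crosses to the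
right and the under-strand to the left; for a negative crossing it is the
other way around.  Labels are unchanged at virtual crossings. -/
def Passage.inc (p : Passage) : ℤ := if p.isOver then -p.sign else p.sign

/-- The Gauss code of one oriented circle component. -/
abbrev KCode := List Passage

/-- The list of classical crossing names appearing in a code. -/
def crossIds (a : KCode) : List ℕ := (a.map Passage.id).dedup

/-- The number of classical crossings. -/
def numCross (a : KCode) : ℕ := (crossIds a).length

/-- A valid knot code: every crossing has sign `±1` and occurs exactly once as
an over-passage and exactly once as an under-passage, with consistent sign. -/
def ValidK (a : KCode) : Prop :=
  ∀ p ∈ a, (p.sign = 1 ∨ p.sign = -1) ∧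
    (a.filter (fun q => q.id == p.id && q.isOver)).length = 1 ∧
    (a.filter (fun q => q.id == p.id && !q.isOver)).length = 1 ∧
    (∀ q ∈ a, q.id = p.id → q.sign = p.sign)

/-- The canonical affine label of the arc entering the `k`-th passage
(base label `0` on the arc entering the `0`-th passage). -/
def labelAt (a : KCode) (k : ℕ) : ℤ := ((a.take k).map Passage.inc).sum

/-- Position of the over-passage of crossing `i`. -/
def overPos (a : KCode) (i : ℕ) : ℕ := a.findIdx (fun p => p.id == i && p.isOver)

/-- Position of the under-passage of crossing `i`. -/
def underPos (a : KCode) (i : ℕ) : ℕ := a.findIdx (fun p => p.id == i && !p.isOver)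

/-- The sign of crossing `i`. -/
def sgn (a : KCode) (i : ℕ) : ℤ :=
  ((a.find? (fun p => p.id == i)).map Passage.sign).getD 0

/-- The weight `W_K(c)` of a crossing `c`: with incoming labels `a` (left) and
`b` (right) it is `W₊ = a - b - 1` if `sgn c = 1` and `W₋ = b - a + 1` if
`sgn c = -1`; equivalently it is
(label entering the over-passage) − (label entering the under-passage) − sign. -/
def wt (a : KCode) (i : ℕ) : ℤ :=
  labelAt a (overPos a i) - labelAt a (underPos a i) - sgn a i

/-- The affine index polynomial `P_K(t) = ∑_c sgn(c) (t^{W_K(c)} - 1)`. -/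
noncomputable def affP (a : KCode) : LaurentPolynomial ℤ :=
  ((crossIds a).map (fun i => (C (sgn a i)) * (T (wt a i) - 1))).sum

/-- The signed crossing count `wr_n(K) = ∑_{c : W_K(c) = n} sgn(c)`. -/
def wrn (a : KCode) (n : ℤ) : ℤ :=
  (((crossIds a).filter (fun i => wt a i == n)).map (sgn a)).sum

/-- A crossing is odd when it flanks an odd number of symbols of the Gauss
code, i.e. when the positions of its two passages differ by an even number. -/
def OddCross (a : KCode) (i : ℕ) : Bool := (overPos a i + underPos a i) % 2 == 0

/-- The odd writhe `J(K)`: the sum of the signs of the odd crossings. -/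
def oddWrithe (a : KCode) : ℤ := (((crossIds a).filter (OddCross a)).map (sgn a)).sum

/-- The reverse `K̄` of `K`: the same diagram with reversed orientation. -/
def reverseK (a : KCode) : KCode := a.reverse

/-- The (flat) mirror image `K*`: every classical crossing is switched, which
exchanges over- and under-passages and reverses all crossing signs. -/
def switchAll (a : KCode) : KCode := a.map (fun p => ⟨p.id, !p.isOver, -p.sign⟩)

/-- The vertical mirror image `K^!`: reflect the diagram in a plane
perpendicular to the plane of the diagram (which keeps the over/under data
and reverses all crossing signs) and reverse the orientation. -/
def vmirror (a : KCode) : KCode := (a.map (fun p => ⟨p.id, p.isOver, -p.sign⟩)).reverse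

/-- Rename the crossings of a code by `f`. -/
def relabel (f : ℕ → ℕ) (a : KCode) : KCode := a.map (fun p => { p with id := f p.id })

/-! ## Links -/

/-- A link code: a list of circle components. -/
abbrev LCode := List KCode

/-- Validity of a link code: the crossing data is globally consistent. -/
def ValidLink (L : LCode) : Prop := ValidK L.flatten

def crossIdsL (L : LCode) : List ℕ := crossIds L.flatten

def sgnL (L : LCode) (i : ℕ) : ℤ := sgn L.flatten i

/-- An affine (integer) labeling of the arcs of a link diagram:
`lab c k` is the label of the arc entering the `k`-th passage of the `c`-th
component; at each classical crossing with left incoming label `a` and right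
incoming label `b`, the left outgoing label is `b+1` and the right outgoing
label is `a-1`, i.e. passing through a passage changes the label by its
increment.  Labels are unchanged at virtual crossings. -/
def IsAffineLabeling (L : LCode) (lab : ℕ → ℕ → ℤ) : Prop :=
  ∀ c, c < L.length → ∀ k, k < (L.getD c []).length →
    lab c ((k + 1) % (L.getD c []).length) =
      lab c k + ((L.getD c []).getD k default).inc

/-- Locations `(component, position)` of the passages of crossing `i` that are
over-passages (`sel = true`) resp. under-passages (`sel = false`). -/
def locs (L : LCode) (i : ℕ) (sel : Bool) : List (ℕ × ℕ) :=
  (List.range L.length).flatMap (fun c =>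
    (List.range (L.getD c []).length).filterMap (fun k =>
      if ((L.getD c []).getD k default).id = i ∧ ((L.getD c []).getD k default).isOver = sel
      then some (c, k) else none))

/-- The weight of crossing `i` of a link diagram with affine labeling `lab`. -/
def wtL (L : LCode) (lab : ℕ → ℕ → ℤ) (i : ℕ) : ℤ :=
  lab ((locs L i true).headD (0, 0)).1 ((locs L i true).headD (0, 0)).2
    - lab ((locs L i false).headD (0, 0)).1 ((locs L i false).headD (0, 0)).2
    - sgnL L i

/-- The affine index polynomial of an affinely labeled link diagram. -/
noncomputable def affPL (L : LCode) (lab : ℕ → ℕ → ℤ) : LaurentPolynomial ℤ :=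
  ((crossIdsL L).map (fun i => (C (sgnL L i)) * (T (wtL L lab i) - 1))).sum

/-- The passages of component `c` whose partner passage lies on a different
component. -/
def crossPassages (L : LCode) (c : ℕ) : KCode :=
  (L.getD c []).filter (fun p =>
    ((L.getD c []).filter (fun q => q.id == p.id)).length == 1)

/-- The algebraic intersection number of component `c` with the union of the
other components: the signed count, in the plane, of the crossings of
component `c` with the other components (the strand crossing to the left
counts `+1`, to the right `−1`). -/
def algInt (L : LCode) (c : ℕ) : ℤ := ((crossPassages L c).map Passage.inc).sum

/-- A multi-component diagram is compatible when every component has algebraic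
intersection number zero with the union of the other components. -/
def Compatible (L : LCode) : Prop := ∀ c < L.length, algInt L c = 0

/-! ## Virtual isotopy

Link codes whose components carry an inert tracking label (a natural number);
the labels are preserved by isotopy and are used to follow components through
the births, deaths and saddles of a cobordism. -/

abbrev LLC := List (ℕ × KCode)

def plainL (L : LLC) : LCode := L.map Prod.snd

def idsOf (L : LLC) : List ℕ := crossIdsL (plainL L)

def pieceIds (L : LLC) : List ℕ := L.map Prod.fst

/-- `ReplC c c' segs segs'`: the circle `c'` is obtained from the circle `c`
by replacing, scanning from left to right, an initial batch of the listed
segments (`u` is replaced by `v` for each pair `(u, v)`), leaving `segs'`. -/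
inductive ReplC : KCode → KCode → List (KCode × KCode) → List (KCode × KCode) → Prop
  | nil (c : KCode) (segs : List (KCode × KCode)) : ReplC c c segs segs
  | cons {y y' : KCode} {segs segs' : List (KCode × KCode)} (x u v : KCode) :
      ReplC y y' segs segs' →
      ReplC (x ++ u ++ y) (x ++ v ++ y') ((u, v) :: segs) segs'

/-- `ReplL L L' segs`: the labeled link `L'` is obtained from `L` by
simultaneously performing all the listed segment replacements, in scanning
order. -/
inductive ReplL : LLC → LLC → List (KCode × KCode) → Prop
  | nil : ReplL [] [] []
  | cons {c c' : KCode} {L L' : LLC} {segs segs' : List (KCode × KCode)} (k : ℕ) :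
      ReplC c c' segs segs' → ReplL L L' segs' → ReplL ((k, c) :: L) ((k, c') :: L') segs

/-- `if b then [p, q] else [q, p]`. -/
def pairOf (b : Bool) (p q : Passage) : KCode := if b then [p, q] else [q, p]

/-- A generating move of oriented virtual isotopy on Gauss codes.  The
constructors `perm`, `rotate`, `rename` are inessential re-encodings; in
particular the virtual Reidemeister moves and the detour move leave the Gauss
code unchanged.  The constructors `r1`, `r2`, `r3` are the oriented classical
Reidemeister moves (`r1` and `r2` are stated as insertions; the inverse moves
are recovered by taking the symmetric closure). -/
inductive MoveStep : LLC → LLC → Prop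
  /-- re-ordering the components -/
  | perm {L L' : LLC} (h : L.Perm L') : MoveStep L L'
  /-- moving the base point of a component -/
  | rotate (k : ℕ) (x y : KCode) (L : LLC) :
      MoveStep ((k, x ++ y) :: L) ((k, y ++ x) :: L)
  /-- renaming the crossings injectively -/
  | rename {L : LLC} (f : ℕ → ℕ) (hf : Function.Injective f) :
      MoveStep L (L.map (fun c => (c.1, relabel f c.2)))
  /-- first Reidemeister move: insertion of a kink with a fresh crossing `i` -/
  | r1 {L L' : LLC} (i : ℕ) (o : Bool) (s : ℤ) (hs : s = 1 ∨ s = -1) (hi : i ∉ idsOf L)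
      (h : ReplL L L' [([], [⟨i, o, s⟩, ⟨i, !o, s⟩])]) : MoveStep L L'
  /-- second Reidemeister move: one strand slides across another, creating two
  fresh crossings `i, j` with opposite signs; `o` records whether the first
  strand passes over, `ord` the relative orientation of the strands. -/
  | r2 {L L' : LLC} (i j : ℕ) (o ord : Bool) (s : ℤ) (hs : s = 1 ∨ s = -1)
      (hij : i ≠ j) (hi : i ∉ idsOf L) (hj : j ∉ idsOf L)
      (h : ReplL L L'
        [([], [⟨i, o, s⟩, ⟨j, o, -s⟩]),
         ([], if ord then [⟨j, !o, -s⟩, ⟨i, !o, s⟩] else [⟨i, !o, s⟩, ⟨j, !o, -s⟩])]) :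
      MoveStep L L'
  /-- third Reidemeister move: a strand slides across a crossing.  Crossing
  `i` joins the top and the middle strand, `j` the top and the bottom strand,
  `k` the middle and the bottom strand; on each of the three strands the
  corresponding pair of adjacent passages is transposed.  The product of the
  three signs is `+1`, and the orders of the pairs along the strands are
  correlated with the signs as dictated by the orientations of the three
  strands (`t` records the order along the top strand). -/
  | r3 {L L' : LLC} (i j k : ℕ) (si sj sk : ℤ)
      (hsi : si = 1 ∨ si = -1) (hsj : sj = 1 ∨ sj = -1) (hsk : sk = 1 ∨ sk = -1)
      (hprod : si * sj * sk = 1)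
      (hij : i ≠ j) (hik : i ≠ k) (hjk : j ≠ k)
      (t : Bool) (segs : List (KCode × KCode))
      (hsegs : segs.Perm
        [(pairOf t ⟨i, true, si⟩ ⟨j, true, sj⟩,
          pairOf (!t) ⟨i, true, si⟩ ⟨j, true, sj⟩),
         (pairOf (t == (sj * sk == 1)) ⟨i, false, si⟩ ⟨k, true, sk⟩,
          pairOf (!(t == (sj * sk == 1))) ⟨i, false, si⟩ ⟨k, true, sk⟩),
         (pairOf (t == (si * sk == 1)) ⟨j, false, sj⟩ ⟨k, false, sk⟩,
          pairOf (!(t == (si * sk == 1))) ⟨j, false, sj⟩ ⟨k, false, sk⟩)])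
      (h : ReplL L L' segs) : MoveStep L L'

/-- Oriented virtual isotopy: the equivalence relation generated by the
classical Reidemeister moves, the virtual Reidemeister moves and the detour
move (the latter two being invisible on Gauss codes). -/
def Isotopic : LLC → LLC → Prop := Relation.EqvGen MoveStep

/-! ## Cobordism

A cobordism is a sequence of isotopies, births and deaths of unknotted
circles, and oriented saddle moves.  The schema of a cobordism is the abstract
surface it generates; we track its connected pieces through the component
labels, the genus of each piece, and the total genus of the pieces that have
been closed off, so that the genus of the schema is well defined. -/

/-- A state of a cobordism in progress: the current labeled link diagram (the
label of a circle names the surface piece it bounds), the genus of each piece,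
and the accumulated genus of closed-off pieces. -/
structure CobState where
  link : LLC
  genus : ℕ → ℕ
  closed : ℕ

/-- One step of a virtual cobordism. -/
inductive CobStep : CobState → CobState → Prop
  /-- a virtual isotopy move -/
  | isot {L L' : LLC} (g : ℕ → ℕ) (c : ℕ) (h : MoveStep L L') :
      CobStep ⟨L, g, c⟩ ⟨L', g, c⟩
  /-- birth of an unknotted circle, starting a fresh piece of genus `0` -/
  | birth (k : ℕ) (L : LLC) (g : ℕ → ℕ) (c : ℕ) (hk : k ∉ pieceIds L) :
      CobStep ⟨L, g, c⟩ ⟨(k, []) :: L, Function.update g k 0, c⟩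
  /-- death of an unknotted circle whose piece still has other boundary -/
  | death_keep (k : ℕ) (L : LLC) (g : ℕ → ℕ) (c : ℕ) (hk : k ∈ pieceIds L) :
      CobStep ⟨(k, []) :: L, g, c⟩ ⟨L, g, c⟩
  /-- death of an unknotted circle closing off its piece -/
  | death_close (k : ℕ) (L : LLC) (g : ℕ → ℕ) (c : ℕ) (hk : k ∉ pieceIds L) :
      CobStep ⟨(k, []) :: L, g, c⟩ ⟨L, g, c + g k⟩
  /-- oriented saddle splitting one circle into two (genus unchanged) -/
  | saddle_split (k : ℕ) (x y : KCode) (L : LLC) (g : ℕ → ℕ) (c : ℕ) :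
      CobStep ⟨(k, x ++ y) :: L, g, c⟩ ⟨(k, x) :: (k, y) :: L, g, c⟩
  /-- oriented saddle merging two boundary circles of the same piece
  (the genus of the piece increases by one) -/
  | saddle_merge_same (k : ℕ) (x y : KCode) (L : LLC) (g : ℕ → ℕ) (c : ℕ) :
      CobStep ⟨(k, x) :: (k, y) :: L, g, c⟩
        ⟨(k, x ++ y) :: L, Function.update g k (g k + 1), c⟩
  /-- oriented saddle merging boundary circles of two different pieces
  (the pieces merge and their genera add) -/
  | saddle_merge_diff (j k : ℕ) (x y : KCode) (L : LLC) (g : ℕ → ℕ) (c : ℕ)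
      (hjk : j ≠ k) :
      CobStep ⟨(j, x) :: (k, y) :: L, g, c⟩
        ⟨(j, x ++ y) :: (L.map fun p => if p.1 = k then (j, p.2) else p),
          Function.update (Function.update g j (g j + g k)) k 0, c⟩

/-- A virtual cobordism: a finite sequence of cobordism steps. -/
def Cob : CobState → CobState → Prop := Relation.ReflTransGen CobStep

/-- `L` and `L'` cobound a virtual cobordism (of some genus). -/
def Cobordant (L L' : LLC) : Prop :=
  ∃ g' c', Cob ⟨L, fun _ => 0, 0⟩ ⟨L', g', c'⟩

/-- The knot `a` bounds a virtual surface schema of genus `G`: there is a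
virtual cobordism from `a` to the empty link, and `G` is the total genus of
the pieces of its schema. -/
def BoundsGenus (a : KCode) (G : ℕ) : Prop :=
  ∃ g' : ℕ → ℕ, Cob ⟨[(0, a)], fun _ => 0, 0⟩ ⟨[], g', G⟩

/-! ## Concordance

A genus-zero cobordism (concordance) is one in which every critical point is
paired: each birth is paired with a canceling saddle and each death with a
canceling saddle.  An elementary concordance is a birth followed (after
isotopy) by a saddle amalgamating the born circle, or a saddle splitting off a
circle that (after isotopy) dies. -/

/-- One step of a concordance. -/
inductive ConcStep : LLC → LLC → Prop
  /-- a virtual isotopy -/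
  | isot {L L' : LLC} (h : Isotopic L L') : ConcStep L L'
  /-- elementary concordance: birth of an unknotted circle (tracked by the
  fresh label `k`), isotopy, then an oriented saddle amalgamating the born
  circle with another component -/
  | birth_saddle {L rest : LLC} (j k : ℕ) (x y : KCode)
      (hk : k ∉ pieceIds L)
      (h : Isotopic ((k, []) :: L) ((j, x) :: (k, y) :: rest)) :
      ConcStep L ((j, x ++ y) :: rest)
  /-- elementary concordance: an oriented saddle splitting off a circle
  (tracked by the fresh label `k`) which after isotopy is an unknotted,
  unlinked circle and dies -/
  | saddle_death {M rest : LLC} (j k : ℕ) (x y : KCode)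
      (hk : k ∉ pieceIds ((j, x ++ y) :: M))
      (h : Isotopic ((j, x) :: (k, y) :: M) ((k, []) :: rest)) :
      ConcStep ((j, x ++ y) :: M) rest

/-- Virtual concordance: genus-zero virtual cobordism. -/
def Concordant : LLC → LLC → Prop := Relation.EqvGen ConcStep

/-- Virtual concordance of knots. -/
def ConcordantK (a b : KCode) : Prop := Concordant [(0, a)] [(0, b)]

/-- The unknot: a circle with no classical crossings. -/
def unknotCode : KCode := []

/-- A virtual knot is (virtually) slice when it is virtually concordant to
the unknot. -/
def SliceK (a : KCode) : Prop := ConcordantK a unknotCode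

/-! ## Seifert circles and faces -/

/-- The position of the other passage of the crossing visited at position `k`. -/
def partnerIdx (a : KCode) (k : ℕ) : ℕ :=
  ((List.range a.length).filter
    (fun j => j != k && (a.getD j default).id == (a.getD k default).id)).headD 0

/-- Traversal of the diagram obtained by the oriented smoothing of every
classical crossing: from the arc entering passage `k+1` one exits along the
arc leaving the partner passage. -/
def seifNext (a : KCode) (k : ℕ) : ℕ := partnerIdx a ((k + 1) % a.length)

/-- A canonical representative of the Seifert circle through arc `k`. -/
def seifRep (a : KCode) (k : ℕ) : ℕ :=
  ((List.range a.length).map (fun t => (seifNext a)^[t] k)).foldr min k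

/-- The number of (virtual) Seifert circles: the number of cycles of the
oriented smoothing of all classical crossings.  A crossingless circle is a
single Seifert circle. -/
def seifertCount (a : KCode) : ℕ :=
  if a.length = 0 then 1 else ((List.range a.length).map (seifRep a)).dedup.length

/-- The counterclockwise-next edge-end around a crossing.  An edge-end is a
pair (position, isIn): the head (`isIn = true`) or the tail (`isIn = false`)
of an arc at the passage at that position. -/
def nextEnd (a : KCode) (e : ℕ × Bool) : ℕ × Bool :=
  let p := a.getD e.1 default
  (partnerIdx a e.1, if p.isOver == (p.sign == 1) then e.2 else !e.2)

/-- The edge-end at which a directed arc (a dart) arrives. -/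
def headEnd (a : KCode) (d : ℕ × Bool) : ℕ × Bool :=
  if d.2 then ((d.1 + 1) % a.length, true) else (d.1, false)

/-- The dart leaving along a given edge-end. -/
def dartFrom (a : KCode) (e : ℕ × Bool) : ℕ × Bool :=
  if e.2 then ((e.1 + a.length - 1) % a.length, false) else (e.1, true)

/-- The face-tracing successor of a dart. -/
def faceNext (a : KCode) (d : ℕ × Bool) : ℕ × Bool :=
  dartFrom a (nextEnd a (headEnd a d))

def encDart (d : ℕ × Bool) : ℕ := 2 * d.1 + (if d.2 then 1 else 0)

/-- A canonical representative of the face through a given dart. -/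
def faceRep (a : KCode) (d : ℕ × Bool) : ℕ :=
  ((List.range (2 * a.length)).map (fun t => encDart ((faceNext a)^[t] d))).foldr
    min (encDart d)

/-- The number of faces of the abstract (ribbon) diagram of a code. -/
def numFaces (a : KCode) : ℕ :=
  (((List.range a.length).flatMap (fun k => [(k, true), (k, false)])).map
    (faceRep a)).dedup.length

/-- A knot code is classical when its underlying abstract diagram is planar,
i.e. (by Euler's formula) when it has `n + 2` faces, `n` being the number of
crossings.  Classical knot diagrams are exactly the virtual knot diagrams
having a realization with no virtual crossings. -/
def IsClassical (a : KCode) : Prop := a = [] ∨ numFaces a = numCross a + 2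

/-! ## Flat diagrams -/

/-- A passage of a flat (no over/under information) virtual knot diagram:
`left = true` when the other strand crosses to the left, so that the affine
label increases by one. -/
structure FlatPassage where
  id : ℕ
  left : Bool
  deriving DecidableEq, Repr

instance : Inhabited FlatPassage := ⟨⟨0, false⟩⟩

/-- The label increment at a flat passage. -/
def FlatPassage.inc (p : FlatPassage) : ℤ := if p.left then 1 else -1

/-- A valid flat knot code: each crossing is traversed exactly twice, once
with increment `+1` and once with increment `-1`. -/
def ValidFlat (a : List FlatPassage) : Prop :=
  ∀ p ∈ a, (a.filter (fun q => q.id == p.id && q.left)).length = 1 ∧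
    (a.filter (fun q => q.id == p.id && !q.left)).length = 1

/-- An affine labeling of a flat knot diagram: `lab k` is the label of the arc
entering the `k`-th passage, and passing a crossing changes the label by the
increment of the passage. -/
def IsFlatLabeling (a : List FlatPassage) (lab : ℕ → ℤ) : Prop :=
  ∀ k, k < a.length → lab ((k + 1) % a.length) = lab k + (a.getD k default).inc

/-!
Along a component the labels are forced to be the partial sums of the passage increments, so a
labeling exists iff the total increment of every component vanishes. In a valid code the two
passages of a crossing are an over- and an under-passage of the same sign, hence have opposite
increments: the passages of the self-crossings of a component cancel in pairs, and its total
increment is its algebraic intersection number with the other components.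
-/

theorem List.sum_map_eq_zero_of_forall_sum_map_filter_eq_zero {α β M : Type*}
    [AddCommMonoid M] [BEq β] [LawfulBEq β] (key : α → β) (f : α → M) :
    ∀ a : List α, (∀ i, ((a.filter (fun p => key p == i)).map f).sum = 0) → (a.map f).sum = 0
  | [], _ => rfl
  | p :: t, hfib => by
    set rest := (p :: t).filter (fun q => !(key q == key p))
    have hrest : ∀ i, ((rest.filter (fun q => key q == i)).map f).sum = 0 := by
      intro i
      by_cases hi : i = key p
      · subst hi
        simp [rest, List.filter_filter]
      · have : rest.filter (fun q => key q == i) = (p :: t).filter (fun q => key q == i) := by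
          simp only [rest, List.filter_filter]
          exact List.filter_congr fun q _ => by by_cases hq : key q = i <;> simp [hq, hi]
        rw [this, hfib]
    rw [← (((p :: t).filter_append_perm (fun q => key q == key p)).map f).sum_eq,
      List.map_append, List.sum_append, hfib,
      List.sum_map_eq_zero_of_forall_sum_map_filter_eq_zero key f rest hrest, add_zero]
termination_by a => a.length
decreasing_by exact List.length_filter_lt_length_iff_exists.mpr ⟨p, List.mem_cons_self, by simp⟩

namespace ValidK

variable {F : KCode}

theorem exists_filter_id_perm (hF : ValidK F) {p : Passage} (hp : p ∈ F) :
    ∃ qo qu : Passage, (F.filter (fun q => q.id == p.id)).Perm [qo, qu] ∧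
      qo.isOver = true ∧ qu.isOver = false ∧ qo.sign = qu.sign := by
  obtain ⟨-, hover, hunder, hsign⟩ := hF p hp
  obtain ⟨qo, hqo⟩ := List.length_eq_one_iff.mp hover
  obtain ⟨qu, hqu⟩ := List.length_eq_one_iff.mp hunder
  have hqo_mem : qo ∈ F.filter (fun q => q.id == p.id && q.isOver) := by simp [hqo]
  have hqu_mem : qu ∈ F.filter (fun q => q.id == p.id && !q.isOver) := by simp [hqu]
  simp only [List.mem_filter, Bool.and_eq_true, beq_iff_eq, Bool.not_eq_eq_eq_not,
    Bool.not_true] at hqo_mem hqu_mem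
  refine ⟨qo, qu, ?_, hqo_mem.2.2, hqu_mem.2.2,
    (hsign qo hqo_mem.1 hqo_mem.2.1).trans (hsign qu hqu_mem.1 hqu_mem.2.1).symm⟩
  refine (List.filter_append_perm (fun q => q.isOver) _).symm.trans ?_
  rw [List.filter_filter, List.filter_filter, List.filter_congr (fun q _ => Bool.and_comm ..),
    hqo, List.filter_congr (fun q _ => Bool.and_comm ..), hqu]
  rfl

theorem length_filter_id (hF : ValidK F) {p : Passage} (hp : p ∈ F) :
    (F.filter (fun q => q.id == p.id)).length = 2 := by
  obtain ⟨qo, qu, hperm, -⟩ := hF.exists_filter_id_perm hp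
  exact hperm.length_eq

theorem sum_map_inc_filter_id (hF : ValidK F) (i : ℕ) :
    ((F.filter (fun q => q.id == i)).map Passage.inc).sum = 0 := by
  by_cases hi : ∃ p ∈ F, p.id = i
  · obtain ⟨p, hp, rfl⟩ := hi
    obtain ⟨qo, qu, hperm, hqo, hqu, hsign⟩ := hF.exists_filter_id_perm hp
    simp [(hperm.map Passage.inc).sum_eq, Passage.inc, hqo, hqu, hsign]
  · push Not at hi
    have hnil : F.filter (fun q => q.id == i) = [] :=
      List.filter_eq_nil_iff.mpr fun q hq => by simpa using hi q hq
    simp [hnil]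

theorem sum_map_inc_filter_id_of_sublist (hF : ValidK F) {a : KCode} (ha : a.Sublist F) (i : ℕ)
    (h1 : (a.filter (fun q => q.id == i)).length ≠ 1) :
    ((a.filter (fun q => q.id == i)).map Passage.inc).sum = 0 := by
  have hsub := ha.filter (fun q => q.id == i)
  cases hfib : a.filter (fun q => q.id == i) with
  | nil => rfl
  | cons q r =>
    have hq : q ∈ F.filter (fun q => q.id == i) := hsub.subset (by simp [hfib])
    obtain ⟨hqF, hqi⟩ := List.mem_filter.mp hq
    have hlen := hF.length_filter_id hqF
    rw [beq_iff_eq.mp hqi] at hlen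
    have hfull : a.filter (fun q => q.id == i) = F.filter (fun q => q.id == i) := by
      refine hsub.eq_of_length ?_
      have := hsub.length_le
      simp only [hfib, List.length_cons] at h1 this ⊢
      omega
    rw [← hfib, hfull, hF.sum_map_inc_filter_id i]

theorem sum_map_inc_filter_single_of_sublist (hF : ValidK F) {a : KCode} (ha : a.Sublist F) :
    ((a.filter (fun p => (a.filter (fun q => q.id == p.id)).length == 1)).map
      Passage.inc).sum = (a.map Passage.inc).sum := by
  rw [← ((a.filter_append_perm _).map Passage.inc).sum_eq, List.map_append, List.sum_append,
    left_eq_add]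
  refine List.sum_map_eq_zero_of_forall_sum_map_filter_eq_zero Passage.id _ _ fun i => ?_
  have hfib : (a.filter (fun q => !((a.filter (fun r => r.id == q.id)).length == 1))).filter
      (fun q => q.id == i) =
      a.filter (fun q => q.id == i && !((a.filter (fun r => r.id == i)).length == 1)) := by
    rw [List.filter_filter]
    refine List.filter_congr fun q _ => ?_
    by_cases hq : q.id = i
    · rw [hq]
    · simp only [beq_false_of_ne hq, Bool.false_and]
  rw [hfib]
  by_cases h1 : (a.filter (fun q => q.id == i)).length = 1
  · simp only [h1, BEq.rfl, Bool.not_true, Bool.and_false, List.filter_false, List.map_nil,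
      List.sum_nil]
  · simp only [beq_false_of_ne h1, Bool.not_false, Bool.and_true]
    exact hF.sum_map_inc_filter_id_of_sublist ha i h1

end ValidK

theorem algInt_eq_sum_map_inc {L : LCode} (hL : ValidLink L) {c : ℕ} (hc : c < L.length) :
    algInt L c = ((L.getD c []).map Passage.inc).sum := by
  have hmem : L.getD c [] ∈ L := by
    rw [List.getD_eq_getElem _ _ hc]
    exact List.getElem_mem hc
  exact ValidK.sum_map_inc_filter_single_of_sublist hL (List.sublist_flatten_of_mem hmem)

section labelAt

variable {a : KCode}

theorem labelAt_zero : labelAt a 0 = 0 := by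
  simp [labelAt]

theorem labelAt_length : labelAt a a.length = (a.map Passage.inc).sum := by
  simp [labelAt]

theorem labelAt_succ {k : ℕ} (hk : k < a.length) :
    labelAt a (k + 1) = labelAt a k + (a.getD k default).inc := by
  rw [labelAt, labelAt, List.take_add_one, List.getElem?_eq_getElem hk, List.getD_eq_getElem _ _ hk,
    Option.toList_some, List.map_append, List.sum_append, List.map_singleton, List.sum_singleton]

theorem sum_map_inc_eq_zero_of_labeling {lab : ℕ → ℤ}
    (h : ∀ k, k < a.length → lab ((k + 1) % a.length) = lab k + (a.getD k default).inc) :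
    (a.map Passage.inc).sum = 0 := by
  have hlab : ∀ k ≤ a.length, lab (k % a.length) = lab 0 + labelAt a k := by
    intro k
    induction k with
    | zero => simp [labelAt_zero]
    | succ k ih =>
      intro hk
      have hmod := ih (Nat.le_of_succ_le hk)
      rw [Nat.mod_eq_of_lt hk] at hmod
      rw [h k hk, hmod, labelAt_succ hk, add_assoc]
  have := hlab a.length le_rfl
  rwa [Nat.mod_self, labelAt_length, left_eq_add] at this

theorem labelAt_add_one_mod (h : (a.map Passage.inc).sum = 0) {k : ℕ} (hk : k < a.length) :
    labelAt a ((k + 1) % a.length) = labelAt a k + (a.getD k default).inc := by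
  rw [← labelAt_succ hk]
  rcases (show k + 1 ≤ a.length from hk).lt_or_eq with hlt | heq
  · rw [Nat.mod_eq_of_lt hlt]
  · rw [heq, Nat.mod_self, labelAt_zero, labelAt_length, h]

end labelAt

/-- A multi-component virtual link diagram `D` admits an
affine labeling if and only if `D` is compatible, i.e. every component of `D`
has algebraic intersection number zero with the union of the other components
(in a traverse of a component each self-crossing is met twice with canceling
increments, while each crossing with another component is met once with
increment equal to its sign relative to that component, so the labeling closes
up on every component exactly when each such signed sum vanishes). -/
theorem affine_labeling_iff_compatible (L : LCode) (hL : ValidLink L) :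
    (∃ lab : ℕ → ℕ → ℤ, IsAffineLabeling L lab) ↔ Compatible L := by
  constructor
  · rintro ⟨lab, hlab⟩ c hc
    rw [algInt_eq_sum_map_inc hL hc]
    exact sum_map_inc_eq_zero_of_labeling (hlab c hc)
  · intro hcomp
    refine ⟨fun c => labelAt (L.getD c []), fun c hc k hk => labelAt_add_one_mod ?_ hk⟩
    rw [← algInt_eq_sum_map_inc hL hc]
    exact hcomp c hc
end

section
/- If K is a virtual knot diagram and K-bar denotes the reverse of K (the diagram with the orientation reversed), then every crossing c of K with corresponding crossing c-bar of K-bar satisfies W(c-bar) = -W(c), and consequently P_{K-bar}(t) = P_K(t^{-1}). -/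
/-!
# Virtual knots and links via signed Gauss codes

A virtual knot or link diagram, up to the virtual Reidemeister moves and the
detour move, is faithfully encoded by its signed oriented Gauss code: the
cyclic sequence, along each component, of passages through the classical
crossings, each passage recording the crossing's name, whether the strand
passes over or under, and the crossing sign.  Virtual crossings and the
detour move are invisible in this encoding, so oriented virtual isotopy is
generated by the oriented classical Reidemeister moves together with
re-encoding moves (rotation of the base point, permutation of the components,
renaming of the crossings).
-/

open LaurentPolynomial

/-! Read backwards, a code assigns to the arc entering a passage the sum of the increments after
that passage.  Hence for each passage `q` the labels entering it from the two ends, plus `q.inc`,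
add up to the total increment.  Subtracting this identity for the under-passage of a crossing from
the one for its over-passage, whose increments are `sgn` and `-sgn`, turns `W` into `-W`. -/

theorem List.findIdx_append_cons_of_forall_not {α : Type*} {p : α → Bool} {l₁ l₂ : List α}
    {q : α} (h₁ : ∀ x ∈ l₁, ¬p x) (hq : p q) : (l₁ ++ q :: l₂).findIdx p = l₁.length := by
  have hl₁ : l₁.findIdx p = l₁.length := List.findIdx_eq_length.mpr (by simpa using h₁)
  simp [List.findIdx_append, hl₁, List.findIdx_cons, hq]

theorem labelAt_findIdx_add_labelAt_reverse_findIdx {a : KCode} {P : Passage → Bool} {q : Passage}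
    (h : a.filter P = [q]) :
    labelAt a (a.findIdx P) + q.inc + labelAt a.reverse (a.reverse.findIdx P) =
      (a.map Passage.inc).sum := by
  obtain ⟨l₁, l₂, rfl, h₁, hq, h₂⟩ := List.filter_eq_cons_iff.mp h
  have h₂' : ∀ x ∈ l₂.reverse, ¬P x := by simpa [List.filter_eq_nil_iff] using h₂
  have hrev : (l₁ ++ q :: l₂).reverse = l₂.reverse ++ q :: l₁.reverse := by simp
  rw [hrev, List.findIdx_append_cons_of_forall_not h₁ hq,
    List.findIdx_append_cons_of_forall_not h₂' hq]
  simp [labelAt, List.sum_reverse]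
  ring

theorem sgn_eq_of_mem {a : KCode} {i : ℕ} {p : Passage} (hp : p ∈ a) (hpi : p.id = i)
    (hsign : ∀ q ∈ a, q.id = i → q.sign = p.sign) : sgn a i = p.sign := by
  obtain ⟨r, hr⟩ : ∃ r, a.find? (fun q => q.id == i) = some r :=
    Option.isSome_iff_exists.mp (List.find?_isSome.mpr ⟨p, hp, by simpa using hpi⟩)
  have hri : r.id = i := by simpa using List.find?_some hr
  simp [sgn, hr, hsign r (List.mem_of_find?_eq_some hr) hri]

theorem mem_crossIds {a : KCode} {i : ℕ} : i ∈ crossIds a ↔ ∃ p ∈ a, p.id = i := by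
  simp [crossIds]

theorem crossIds_reverse_perm (a : KCode) : (crossIds (reverseK a)).Perm (crossIds a) :=
  (List.perm_ext_iff_of_nodup (List.nodup_dedup _) (List.nodup_dedup _)).mpr
    fun _ => by simp [reverseK]

namespace ValidK

variable {a : KCode} {i : ℕ}

theorem sgn_id_eq (ha : ValidK a) {p : Passage} (hp : p ∈ a) : sgn a p.id = p.sign :=
  sgn_eq_of_mem hp rfl (ha p hp).2.2.2

theorem sgn_reverse (ha : ValidK a) (hi : i ∈ crossIds a) : sgn (reverseK a) i = sgn a i := by
  obtain ⟨p, hp, rfl⟩ := mem_crossIds.mp hi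
  rw [ha.sgn_id_eq hp, reverseK, sgn_eq_of_mem (List.mem_reverse.mpr hp) rfl
    fun q hq => (ha p hp).2.2.2 q (List.mem_reverse.mp hq)]

theorem exists_filter_over_eq_singleton (ha : ValidK a) (hi : i ∈ crossIds a) :
    ∃ q, a.filter (fun p => p.id == i && p.isOver) = [q] ∧ q.inc = -sgn a i := by
  obtain ⟨p, hp, rfl⟩ := mem_crossIds.mp hi
  obtain ⟨q, hq⟩ := List.length_eq_one_iff.mp (ha p hp).2.1
  have hqmem : q ∈ a.filter (fun r => r.id == p.id && r.isOver) := by simp [hq]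
  obtain ⟨hqa, hqi, hqo⟩ : q ∈ a ∧ q.id = p.id ∧ q.isOver := by simpa using hqmem
  refine ⟨q, hq, ?_⟩
  rw [← hqi, ha.sgn_id_eq hqa, Passage.inc, if_pos hqo]

theorem exists_filter_under_eq_singleton (ha : ValidK a) (hi : i ∈ crossIds a) :
    ∃ q, a.filter (fun p => p.id == i && !p.isOver) = [q] ∧ q.inc = sgn a i := by
  obtain ⟨p, hp, rfl⟩ := mem_crossIds.mp hi
  obtain ⟨q, hq⟩ := List.length_eq_one_iff.mp (ha p hp).2.2.1
  have hqmem : q ∈ a.filter (fun r => r.id == p.id && !r.isOver) := by simp [hq]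
  obtain ⟨hqa, hqi, hqu⟩ : q ∈ a ∧ q.id = p.id ∧ q.isOver = false := by simpa using hqmem
  refine ⟨q, hq, ?_⟩
  rw [← hqi, ha.sgn_id_eq hqa, Passage.inc, hqu, if_neg Bool.false_ne_true]

theorem wt_reverse (ha : ValidK a) (hi : i ∈ crossIds a) : wt (reverseK a) i = -wt a i := by
  obtain ⟨qo, hqo, hinco⟩ := ha.exists_filter_over_eq_singleton hi
  obtain ⟨qu, hqu, hincu⟩ := ha.exists_filter_under_eq_singleton hi
  have hover := labelAt_findIdx_add_labelAt_reverse_findIdx hqo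
  have hunder := labelAt_findIdx_add_labelAt_reverse_findIdx hqu
  rw [wt, wt, ha.sgn_reverse hi]
  unfold overPos underPos reverseK
  linarith

end ValidK

/-- If `K̄` denotes the reverse of `K` (the diagram with the
orientation reversed), then every crossing `c` of `K` with corresponding
crossing `c̄` of `K̄` satisfies `W(c̄) = -W(c)`, and consequently
`P_{K̄}(t) = P_K(t⁻¹)`. -/
theorem affP_reverse (a : KCode) (ha : ValidK a) :
    (∀ i ∈ crossIds a, wt (reverseK a) i = - wt a i) ∧
      affP (reverseK a) = LaurentPolynomial.invert (affP a) := by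
  refine ⟨fun i hi => ha.wt_reverse hi, ?_⟩
  rw [affP, affP, map_list_sum, List.map_map, ← ((crossIds_reverse_perm a).map _).sum_eq]
  refine congrArg List.sum (List.map_congr_left fun i hi => ?_)
  have hi' := (crossIds_reverse_perm a).mem_iff.mp hi
  simp [ha.sgn_reverse hi', ha.wt_reverse hi', mul_sub]
end
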